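/- Let f be twice continuously differentiable on I = [a,b], and assume that f, f′ and f″ do not vanish anywhere on I. Let 0 < δ < (b−a)/2 and put J = [a+δ, b−δ]. Then sup_{x ∈ J} |f′(x)| < δ^{−1} · sup_{x ∈ I} |f(x)|. -/

import Mathlib

/-!
Since `f` has no zero on `[a,b]`, it keeps one sign there, so `|f y - f z| ≤ sup |f|` for all
`y, z ∈ [a,b]`. Since `(f′²)′ = 2 f′ f″` has no zero, `|f′|` is strictly monotone on `[a,b]`.
If it increases, the mean value theorem on `[x, x+δ]` gives `c > x` with
`δ |f′ x| < δ |f′ c| = |f (x+δ) - f x| ≤ sup |f|`; if it decreases, use `[x-δ, x]` instead.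
-/

open Set

lemma IsPreconnected.pos_or_neg_of_ne_zero {α : Type*} [TopologicalSpace α] {s : Set α}
    (hs : IsPreconnected s) {f : α → ℝ} (hf : ContinuousOn f s) (h0 : ∀ x ∈ s, f x ≠ 0) :
    (∀ x ∈ s, 0 < f x) ∨ ∀ x ∈ s, f x < 0 := by
  by_contra! h
  obtain ⟨⟨y, hy, hfy⟩, ⟨z, hz, hfz⟩⟩ := h
  obtain ⟨c, hc, hfc⟩ := hs.intermediate_value hy hz hf ⟨hfy, hfz⟩
  exact h0 c hc hfc

lemma IsPreconnected.abs_sub_le_sSup_abs_of_ne_zero {α : Type*} [TopologicalSpace α]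
    {s : Set α} (hs : IsPreconnected s) {f : α → ℝ} (hf : ContinuousOn f s)
    (h0 : ∀ x ∈ s, f x ≠ 0) (hbdd : BddAbove ((fun t => |f t|) '' s)) {y z : α}
    (hy : y ∈ s) (hz : z ∈ s) :
    |f y - f z| ≤ sSup ((fun t => |f t|) '' s) := by
  have hy' : |f y| ≤ sSup ((fun t => |f t|) '' s) := le_csSup hbdd (mem_image_of_mem _ hy)
  have hz' : |f z| ≤ sSup ((fun t => |f t|) '' s) := le_csSup hbdd (mem_image_of_mem _ hz)
  rcases hs.pos_or_neg_of_ne_zero hf h0 with hpos | hneg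
  · rw [abs_of_pos (hpos y hy)] at hy'
    rw [abs_of_pos (hpos z hz)] at hz'
    exact abs_sub_le_of_nonneg_of_le (hpos y hy).le hy' (hpos z hz).le hz'
  · rw [abs_of_neg (hneg y hy)] at hy'
    rw [abs_of_neg (hneg z hz)] at hz'
    rw [abs_sub_comm, ← neg_sub_neg]
    exact abs_sub_le_of_nonneg_of_le (neg_nonneg.2 (hneg y hy).le) hy'
      (neg_nonneg.2 (hneg z hz).le) hz'

lemma ContDiffOn.hasDerivAt_iteratedDerivWithin {𝕜 F : Type*} [NontriviallyNormedField 𝕜]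
    [NormedAddCommGroup F] [NormedSpace 𝕜 F] {f : 𝕜 → F} {s : Set 𝕜} {m : WithTop ℕ∞} {n : ℕ}
    {x : 𝕜} (hf : ContDiffOn 𝕜 m f s) (hn : n < m) (hs : UniqueDiffOn 𝕜 s) (hx : s ∈ nhds x) :
    HasDerivAt (iteratedDerivWithin n f s) (iteratedDerivWithin (n + 1) f s x) x := by
  rw [iteratedDerivWithin_succ]
  exact ((hf.differentiableOn_iteratedDerivWithin hn hs) x
    (mem_of_mem_nhds hx)).hasDerivWithinAt.hasDerivAt hx

/-- By Darboux's theorem, a nowhere vanishing derivative keeps one sign. -/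
lemma strictMonoOn_or_strictAntiOn_of_hasDerivAt_ne_zero {f f' : ℝ → ℝ} {a b : ℝ}
    (hf : ContinuousOn f (Icc a b)) (hf' : ∀ x ∈ Ioo a b, HasDerivAt f (f' x) x)
    (h0 : ∀ x ∈ Ioo a b, f' x ≠ 0) :
    StrictMonoOn f (Icc a b) ∨ StrictAntiOn f (Icc a b) := by
  have hderiv : ∀ x ∈ interior (Icc a b), deriv f x = f' x := fun x hx =>
    (hf' x (by rwa [interior_Icc] at hx)).deriv
  rcases hasDerivWithinAt_forall_lt_or_forall_gt_of_forall_ne (convex_Ioo a b)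
    (fun x hx => (hf' x hx).hasDerivWithinAt) h0 with hneg | hpos
  · right
    refine strictAntiOn_of_deriv_neg (convex_Icc a b) hf fun x hx => ?_
    rw [hderiv x hx]
    exact hneg x (by rwa [interior_Icc] at hx)
  · left
    refine strictMonoOn_of_deriv_pos (convex_Icc a b) hf fun x hx => ?_
    rw [hderiv x hx]
    exact hpos x (by rwa [interior_Icc] at hx)

lemma sub_mul_abs_lt_abs_sub_of_forall_lt_abs_deriv {f f' : ℝ → ℝ} {u v y : ℝ} (huv : u < v)
    (hf : ContinuousOn f (Icc u v)) (hf' : ∀ x ∈ Ioo u v, HasDerivAt f (f' x) x)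
    (hy : ∀ c ∈ Ioo u v, |y| < |f' c|) :
    (v - u) * |y| < |f v - f u| := by
  obtain ⟨c, hc, hslope⟩ := exists_hasDerivAt_eq_slope f f' huv hf hf'
  have hvu : 0 < v - u := sub_pos.2 huv
  calc (v - u) * |y| < (v - u) * |f' c| := mul_lt_mul_of_pos_left (hy c hc) hvu
    _ = |f v - f u| := by rw [hslope, abs_div, abs_of_pos hvu]; field_simp

lemma strictMonoOn_or_strictAntiOn_abs_of_hasDerivAt_ne_zero {f f' : ℝ → ℝ} {a b : ℝ}
    (hf : ContinuousOn f (Icc a b)) (hf' : ∀ x ∈ Ioo a b, HasDerivAt f (f' x) x)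
    (hf0 : ∀ x ∈ Ioo a b, f x ≠ 0) (hf'0 : ∀ x ∈ Ioo a b, f' x ≠ 0) :
    StrictMonoOn (fun x => |f x|) (Icc a b) ∨ StrictAntiOn (fun x => |f x|) (Icc a b) := by
  have hsq := strictMonoOn_or_strictAntiOn_of_hasDerivAt_ne_zero (hf.pow 2)
    (fun x hx => (hf' x hx).pow 2)
    fun x hx => mul_ne_zero (mul_ne_zero (by norm_num) (pow_ne_zero _ (hf0 x hx))) (hf'0 x hx)
  rcases hsq with hmono | hanti
  · exact Or.inl fun x hx y hy hxy => sq_lt_sq.1 (hmono hx hy hxy)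
  · exact Or.inr fun x hx y hy hxy => sq_lt_sq.1 (hanti hx hy hxy)

lemma mul_abs_deriv_lt_of_abs_sub_le {f f' : ℝ → ℝ} {a b δ M x : ℝ}
    (hf : ContinuousOn f (Icc a b)) (hf' : ∀ x ∈ Ioo a b, HasDerivAt f (f' x) x)
    (hmono : StrictMonoOn (fun x => |f' x|) (Icc a b) ∨
      StrictAntiOn (fun x => |f' x|) (Icc a b))
    (hM : ∀ y ∈ Icc a b, ∀ z ∈ Icc a b, |f y - f z| ≤ M) (hδ : 0 < δ)
    (hx : x ∈ Icc (a + δ) (b - δ)) :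
    δ * |f' x| < M := by
  obtain ⟨hax, hxb⟩ := hx
  have hmem {t : ℝ} (h₁ : a ≤ t) (h₂ : t ≤ b) : t ∈ Icc a b := ⟨h₁, h₂⟩
  rcases hmono with hmono | hanti
  · calc δ * |f' x| = (x + δ - x) * |f' x| := by ring
      _ < |f (x + δ) - f x| :=
        sub_mul_abs_lt_abs_sub_of_forall_lt_abs_deriv (by linarith)
          (hf.mono (Icc_subset_Icc (by linarith) (by linarith)))
          (fun t ht => hf' t ⟨by linarith [ht.1], by linarith [ht.2]⟩)
          fun c hc => hmono (hmem (by linarith) (by linarith))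
            (hmem (by linarith [hc.1]) (by linarith [hc.2])) hc.1
      _ ≤ M := hM _ (hmem (by linarith) (by linarith)) _ (hmem (by linarith) (by linarith))
  · calc δ * |f' x| = (x - (x - δ)) * |f' x| := by ring
      _ < |f x - f (x - δ)| :=
        sub_mul_abs_lt_abs_sub_of_forall_lt_abs_deriv (by linarith)
          (hf.mono (Icc_subset_Icc (by linarith) (by linarith)))
          (fun t ht => hf' t ⟨by linarith [ht.1], by linarith [ht.2]⟩)
          fun c hc => hanti (hmem (by linarith [hc.1]) (by linarith [hc.2]))
            (hmem (by linarith) (by linarith)) hc.2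
      _ ≤ M := hM _ (hmem (by linarith) (by linarith)) _ (hmem (by linarith) (by linarith))

theorem first_deriv_bound_general (a b δ : ℝ) (f : ℝ → ℝ)
    (hf : ContDiffOn ℝ 2 f (Icc a b))
    (hf0 : ∀ x ∈ Icc a b, f x ≠ 0)
    (hf1 : ∀ x ∈ Icc a b, iteratedDerivWithin 1 f (Icc a b) x ≠ 0)
    (hf2 : ∀ x ∈ Icc a b, iteratedDerivWithin 2 f (Icc a b) x ≠ 0)
    (hδ0 : 0 < δ) :
    ∀ x ∈ Icc (a + δ) (b - δ),
      |iteratedDerivWithin 1 f (Icc a b) x| <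
        δ⁻¹ * sSup ((fun t => |f t|) '' Icc a b) := by
  intro x hx
  have hs : UniqueDiffOn ℝ (Icc a b) := uniqueDiffOn_Icc (by linarith [hx.1, hx.2])
  have hfc : ContinuousOn f (Icc a b) := hf.continuousOn
  have hnhds {t : ℝ} (ht : t ∈ Ioo a b) : Icc a b ∈ nhds t := Icc_mem_nhds ht.1 ht.2
  have hf' (t : ℝ) (ht : t ∈ Ioo a b) :
      HasDerivAt f (iteratedDerivWithin 1 f (Icc a b) t) t := by
    simpa only [iteratedDerivWithin_zero, zero_add] using
      hf.hasDerivAt_iteratedDerivWithin (n := 0) (by norm_num) hs (hnhds ht)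
  have habs := strictMonoOn_or_strictAntiOn_abs_of_hasDerivAt_ne_zero
    (hf.continuousOn_iteratedDerivWithin (by norm_num) hs)
    (fun t ht => hf.hasDerivAt_iteratedDerivWithin (n := 1) (by norm_num) hs (hnhds ht))
    (fun t ht => hf1 t (Ioo_subset_Icc_self ht)) fun t ht => hf2 t (Ioo_subset_Icc_self ht)
  have hbdd : BddAbove ((fun t => |f t|) '' Icc a b) :=
    (isCompact_Icc.image_of_continuousOn hfc.abs).bddAbove
  rw [inv_mul_eq_div, lt_div_iff₀' hδ0]
  exact mul_abs_deriv_lt_of_abs_sub_le hfc hf' habs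
    (fun y hy z hz => isPreconnected_Icc.abs_sub_le_sSup_abs_of_ne_zero hfc hf0 hbdd hy hz) hδ0 hx

/-- If `f` is `C²` on `[a,b]` and `f, f′, f″` do not vanish on `[a,b]`, then on
`J = [a+δ, b−δ]` one has `‖f′|_J‖ < δ⁻¹·‖f‖`. -/
theorem first_deriv_bound (a b δ : ℝ) (f : ℝ → ℝ)
    (hf : ContDiffOn ℝ 2 f (Icc a b))
    (hf0 : ∀ x ∈ Icc a b, f x ≠ 0)
    (hf1 : ∀ x ∈ Icc a b, iteratedDerivWithin 1 f (Icc a b) x ≠ 0)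
    (hf2 : ∀ x ∈ Icc a b, iteratedDerivWithin 2 f (Icc a b) x ≠ 0)
    (hδ0 : 0 < δ) (hδ : δ < (b - a) / 2) :
    ∀ x ∈ Icc (a + δ) (b - δ),
      |iteratedDerivWithin 1 f (Icc a b) x| <
        δ⁻¹ * sSup ((fun t => |f t|) '' Icc a b) :=
  first_deriv_bound_general a b δ f hf hf0 hf1 hf2 hδ0
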